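/- Let f_w be an l-layer MPGNN (l ≥ 2) on graphs with n nodes satisfying the following: nonzero weights with ‖U_i‖₂ ≤ M₁ for i ∈ [l−1] and ‖W_i‖₂ ≤ M₂ for i ∈ [l], and entrywise L-Lipschitz nonlinearities φ_k, ρ_k, ψ_k with φ_k(0)=ρ_k(0)=ψ_k(0)=0. Let ΔW_1,…,ΔW_l and ΔU_1,…,ΔU_{l−1} be perturbation matrices of matching sizes, let η = max over i of the ratios ‖ΔU_i‖₂/‖U_i‖₂ and ‖ΔW_i‖₂/‖W_i‖₂, and assume η ≤ 1/l. Let ε > 0, let G = (X, A) be a graph with ‖X‖₂ ≤ B, suppose ‖P_{G'}‖₂ ≤ P̄ for every G' in the ε-attack set of G, and set τ = L³ M₂ P̄. Then for any pair of classes i, j ∈ [K]: if τ = 1, then |RM(f_{w+Δw}(G); i, j) − RM(f_w(G); i, j)| ≤ 2e · η · L (B+ε) M₁ M₂ · (l+1)²; and if τ ≠ 1, then |RM(f_{w+Δw}(G); i, j) − RM(f_w(G); i, j)| ≤ 2e · η · l · L (B+ε) M₁ M₂ · (τ^{l−1} − 1)/(τ − 1). -/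

import Mathlib

open MeasureTheory Matrix Finset

noncomputable section

/-- Spectral norm of a real matrix: the operator norm induced by Euclidean vector norms. -/
def specNorm {m n : Type*} [Fintype m] [Fintype n] [DecidableEq n] (A : Matrix m n ℝ) : ℝ :=
  ‖LinearMap.toContinuousLinearMap (Matrix.toEuclideanLin A)‖

/-- Frobenius norm of a real matrix. -/
def frobNorm {m n : Type*} [Fintype m] [Fintype n] (A : Matrix m n ℝ) : ℝ :=
  Real.sqrt (∑ i, ∑ j, (A i j) ^ 2)

/-- Euclidean norm of a finite real vector. -/
def euclNorm {n : Type*} [Fintype n] (v : n → ℝ) : ℝ :=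
  Real.sqrt (∑ i, (v i) ^ 2)

/-- Node representations of an MPGNN:
`H_0 = 0`, `H_{k+1} = φ_{k+1}(X U_{k+1} + ρ_{k+1}(P ψ_{k+1}(H_k) W_{k+1}))`
(we index weights and nonlinearities from `0`, so `W k`, `U k`, `φ k`, `ρ k`, `ψ k`
are the paper's `W_{k+1}`, `U_{k+1}`, `φ_{k+1}`, `ρ_{k+1}`, `ψ_{k+1}`). -/
def mpgnnRep {n : ℕ} (d : ℕ → ℕ) (φ ρ ψ : ℕ → ℝ → ℝ)
    (W : ∀ k : ℕ, Matrix (Fin (d k)) (Fin (d (k + 1))) ℝ)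
    (U : ∀ k : ℕ, Matrix (Fin (d 0)) (Fin (d (k + 1))) ℝ)
    (P : Matrix (Fin n) (Fin n) ℝ) (X : Matrix (Fin n) (Fin (d 0)) ℝ) :
    (k : ℕ) → Matrix (Fin n) (Fin (d k)) ℝ
  | 0 => 0
  | (k + 1) =>
      (X * U k + (P * (mpgnnRep d φ ρ ψ W U P X k).map (ψ k) * W k).map (ρ k)).map (φ k)

/-- Output (readout) of an `l`-layer MPGNN: `f_w(G) = H_l = (1/n) 1_n H_{l-1} W_l`. -/
def mpgnnOut {n : ℕ} (d : ℕ → ℕ) (φ ρ ψ : ℕ → ℝ → ℝ)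
    (W : ∀ k : ℕ, Matrix (Fin (d k)) (Fin (d (k + 1))) ℝ)
    (U : ∀ k : ℕ, Matrix (Fin (d 0)) (Fin (d (k + 1))) ℝ)
    (P : Matrix (Fin n) (Fin n) ℝ) (X : Matrix (Fin n) (Fin (d 0)) ℝ) :
    (l : ℕ) → Fin (d l) → ℝ
  | 0 => fun _ => 0
  | (l + 1) => fun j => (n : ℝ)⁻¹ * ∑ i, (mpgnnRep d φ ρ ψ W U P X l * W l) i j

/-- The `ε`-attack set of a graph `G = (X, A)`: the node features may be moved by at most
`ε` in spectral norm, and the adjacency matrix may be replaced by any symmetric 0/1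
matrix. -/
def attack {n h₀ : ℕ} (ε : ℝ) (G : Matrix (Fin n) (Fin h₀) ℝ × Matrix (Fin n) (Fin n) ℝ) :
    Set (Matrix (Fin n) (Fin h₀) ℝ × Matrix (Fin n) (Fin n) ℝ) :=
  {G' | specNorm (G'.1 - G.1) ≤ ε ∧ G'.2.IsSymm ∧ ∀ i j, G'.2 i j = 0 ∨ G'.2 i j = 1}

/-- The maximal relative size `η` of the perturbation: the maximum over all layers of
`‖ΔU_i‖₂/‖U_i‖₂` and `‖ΔW_i‖₂/‖W_i‖₂`. -/
def etaRatio (l : ℕ) (d : ℕ → ℕ)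
    (W ΔW : ∀ k : ℕ, Matrix (Fin (d k)) (Fin (d (k + 1))) ℝ)
    (U ΔU : ∀ k : ℕ, Matrix (Fin (d 0)) (Fin (d (k + 1))) ℝ) : ℝ :=
  sSup ({x | ∃ k, k < l ∧ specNorm (ΔW k) / specNorm (W k) = x} ∪
        {x | ∃ k, k < l - 1 ∧ specNorm (ΔU k) / specNorm (U k) = x})

/-- The robust margin operator of a pair of classes `(i, j)` for an MPGNN under
`ε`-attacks, where `Pfun` computes the diffusion matrix `P_{G'}` from the adjacency
matrix: `RM(f_w(G); i, j) = inf_{G' ∈ δ(G)} (f_w(G')_i - f_w(G')_j)`. -/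
def mpgnnRobustMarginPair {n : ℕ} (l : ℕ) (d : ℕ → ℕ) (φ ρ ψ : ℕ → ℝ → ℝ)
    (W : ∀ k : ℕ, Matrix (Fin (d k)) (Fin (d (k + 1))) ℝ)
    (U : ∀ k : ℕ, Matrix (Fin (d 0)) (Fin (d (k + 1))) ℝ)
    (Pfun : Matrix (Fin n) (Fin n) ℝ → Matrix (Fin n) (Fin n) ℝ) (ε : ℝ)
    (G : Matrix (Fin n) (Fin (d 0)) ℝ × Matrix (Fin n) (Fin n) ℝ) (i j : Fin (d l)) : ℝ :=
  sInf {x | ∃ G' ∈ attack ε G,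
    mpgnnOut d φ ρ ψ W U (Pfun G'.2) G'.1 l i -
      mpgnnOut d φ ρ ψ W U (Pfun G'.2) G'.1 l j = x}


/-!
Measure node representations in the Frobenius norm, for which entrywise `L`-Lipschitz
activations are `L`-Lipschitz, and bound matrix products by the spectral norms of the weights.
A layer then gives `‖H_{k+1}‖ ≤ L ‖X‖ M₁ + τ ‖H_k‖`, so `‖H_k‖ ≤ √n L (B+ε) M₁ ∑_{i<k} τ^i`;
weights perturbed by relative size `η` multiply this by at most `(1+η)^k`, and the difference
of the two representations obeys the same recursion with a source term of size `η`, whence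
`‖H'_k - H_k‖ ≤ η k (1+η)^k √n L (B+ε) M₁ ∑_{i<k} τ^i`. The mean readout costs a factor
`M₂ / √n`, and `(1+η)^l ≤ e` for `η ≤ 1/l`, so every output moves by at most
`e η l L (B+ε) M₁ M₂ ∑_{i<l-1} τ^i` on the whole attack set; a margin moves by at most twice
that, and so does its infimum over the attack set.
-/

section SpectralNorm

open scoped Matrix.Norms.L2Operator

variable {m n : Type*} [Fintype m] [Fintype n] [DecidableEq n]

theorem specNorm_eq_l2_opNorm (A : Matrix m n ℝ) : specNorm A = ‖A‖ := rfl

theorem specNorm_nonneg (A : Matrix m n ℝ) : 0 ≤ specNorm A := norm_nonneg A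

theorem specNorm_zero : specNorm (0 : Matrix m n ℝ) = 0 := by
  rw [specNorm_eq_l2_opNorm, norm_zero]

theorem specNorm_pos {A : Matrix m n ℝ} (hA : A ≠ 0) : 0 < specNorm A := by
  rwa [specNorm_eq_l2_opNorm, norm_pos_iff]

theorem specNorm_add_le (A B : Matrix m n ℝ) : specNorm (A + B) ≤ specNorm A + specNorm B :=
  norm_add_le A B

theorem specNorm_transpose [DecidableEq m] (A : Matrix m n ℝ) : specNorm Aᵀ = specNorm A := by
  rw [specNorm_eq_l2_opNorm, specNorm_eq_l2_opNorm, ← conjTranspose_eq_transpose_of_trivial,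
    l2_opNorm_conjTranspose]

theorem norm_toLp_mulVec_le (A : Matrix m n ℝ) (v : n → ℝ) :
    ‖WithLp.toLp 2 (A *ᵥ v)‖ ≤ specNorm A * ‖WithLp.toLp 2 v‖ :=
  l2_opNorm_mulVec A (WithLp.toLp 2 v)

end SpectralNorm

theorem nonneg_of_abs_sub_le_mul {f : ℝ → ℝ} {L : ℝ} (hf : ∀ x y, |f x - f y| ≤ L * |x - y|) :
    0 ≤ L := by
  simpa using (abs_nonneg _).trans (hf 1 0)

theorem le_of_linear_recurrence {x b α : ℕ → ℝ} {τ : ℝ} {N : ℕ} (hτ : 0 ≤ τ) (h0 : x 0 ≤ b 0)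
    (hx : ∀ k < N, x (k + 1) ≤ α k + τ * x k) (hb : ∀ k < N, α k + τ * b k ≤ b (k + 1)) :
    ∀ k ≤ N, x k ≤ b k := by
  intro k hk
  induction k with
  | zero => exact h0
  | succ k ih =>
    calc x (k + 1) ≤ α k + τ * x k := hx k hk
      _ ≤ α k + τ * b k := by gcongr; exact ih (by omega)
      _ ≤ b (k + 1) := hb k hk

theorem add_mul_pow_mul_geom_sum_le {a τ μ : ℝ} (ha : 0 ≤ a) (hμ : 1 ≤ μ) (j : ℕ) :
    μ * a + μ * τ * (μ ^ j * (a * ∑ i ∈ range j, τ ^ i)) ≤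
      μ ^ (j + 1) * (a * ∑ i ∈ range (j + 1), τ ^ i) := by
  calc μ * a + μ * τ * (μ ^ j * (a * ∑ i ∈ range j, τ ^ i))
      = μ * a + μ ^ (j + 1) * (a * (τ * ∑ i ∈ range j, τ ^ i)) := by ring
    _ ≤ μ ^ (j + 1) * a + μ ^ (j + 1) * (a * (τ * ∑ i ∈ range j, τ ^ i)) := by
        gcongr
        exact le_self_pow₀ hμ (by omega)
    _ = μ ^ (j + 1) * (a * ∑ i ∈ range (j + 1), τ ^ i) := by
        rw [geom_sum_succ]; ring

theorem one_add_pow_le_exp_one {η : ℝ} {l : ℕ} (hη0 : 0 ≤ η) (hη : η ≤ 1 / l) :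
    (1 + η) ^ l ≤ Real.exp 1 :=
  (pow_le_pow_left₀ (by linarith) (by simpa using hη) l).trans Real.one_add_inv_pow_le_exp

section Frobenius

attribute [local instance] Matrix.frobeniusNormedAddCommGroup

section FrobeniusLemmas

variable {m n p : Type*} [Fintype m] [Fintype n] [Fintype p]

theorem frobenius_norm_sq (A : Matrix m n ℝ) : ‖A‖ ^ 2 = ∑ i, ∑ j, A i j ^ 2 := by
  rw [frobenius_norm_def, ← Real.rpow_natCast, ← Real.rpow_mul (by positivity)]
  norm_num

theorem frobenius_norm_sq_eq_sum_cols (A : Matrix m n ℝ) :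
    ‖A‖ ^ 2 = ∑ j, ‖WithLp.toLp 2 (fun i => A i j)‖ ^ 2 := by
  simp [frobenius_norm_sq, EuclideanSpace.norm_sq_eq, Finset.sum_comm (γ := m)]

theorem frobenius_norm_mul_le_specNorm_mul [DecidableEq n] (A : Matrix m n ℝ)
    (B : Matrix n p ℝ) : ‖A * B‖ ≤ specNorm A * ‖B‖ := by
  have hcol : ∀ j, ‖WithLp.toLp 2 (fun i => (A * B) i j)‖ ^ 2 ≤
      specNorm A ^ 2 * ‖WithLp.toLp 2 (fun i => B i j)‖ ^ 2 := fun j => by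
    rw [← mul_pow]
    gcongr
    exact norm_toLp_mulVec_le A (fun i => B i j)
  rw [← sq_le_sq₀ (norm_nonneg _) (mul_nonneg (specNorm_nonneg A) (norm_nonneg B)), mul_pow,
    frobenius_norm_sq_eq_sum_cols, frobenius_norm_sq_eq_sum_cols, Finset.mul_sum]
  exact Finset.sum_le_sum fun j _ => hcol j

theorem frobenius_norm_mul_le_mul_specNorm [DecidableEq n] [DecidableEq p]
    (A : Matrix m n ℝ) (B : Matrix n p ℝ) : ‖A * B‖ ≤ ‖A‖ * specNorm B := by
  rw [← frobenius_norm_transpose, transpose_mul, ← frobenius_norm_transpose A,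
    ← specNorm_transpose B, mul_comm]
  exact frobenius_norm_mul_le_specNorm_mul Bᵀ Aᵀ

theorem frobenius_norm_mul_mul_le {q : Type*} [Fintype q] [DecidableEq m] [DecidableEq n]
    [DecidableEq p] (A : Matrix q m ℝ) (M : Matrix m n ℝ) (B : Matrix n p ℝ) :
    ‖A * M * B‖ ≤ specNorm A * ‖M‖ * specNorm B :=
  (frobenius_norm_mul_le_mul_specNorm _ _).trans <| mul_le_mul_of_nonneg_right
    (frobenius_norm_mul_le_specNorm_mul A M) (specNorm_nonneg B)

theorem frobenius_norm_le_sqrt_card_mul_specNorm [DecidableEq m] [DecidableEq n]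
    (A : Matrix m n ℝ) : ‖A‖ ≤ √(Fintype.card m) * specNorm A := by
  have h1 : ‖(1 : Matrix m m ℝ)‖ = √(Fintype.card m) := by
    simpa using congrArg NNReal.toReal (frobenius_nnnorm_one (n := m) (α := ℝ))
  simpa [h1] using frobenius_norm_mul_le_mul_specNorm (1 : Matrix m m ℝ) A

theorem abs_sum_col_le_sqrt_card_mul_frobenius_norm (A : Matrix m n ℝ) (j : n) :
    |∑ i, A i j| ≤ √(Fintype.card m) * ‖A‖ := by
  rw [← sq_le_sq₀ (abs_nonneg _) (by positivity), sq_abs, mul_pow,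
    Real.sq_sqrt (Nat.cast_nonneg _), frobenius_norm_sq]
  calc (∑ i, A i j) ^ 2 ≤ Fintype.card m * ∑ i, A i j ^ 2 := sq_sum_le_card_mul_sum_sq
    _ ≤ Fintype.card m * ∑ i, ∑ k, A i k ^ 2 := by
      gcongr with i
      exact Finset.single_le_sum (f := fun k => A i k ^ 2) (fun _ _ => sq_nonneg _)
        (Finset.mem_univ j)

theorem frobenius_norm_map_sub_map_le {f : ℝ → ℝ} {L : ℝ}
    (hf : ∀ x y, |f x - f y| ≤ L * |x - y|) (A B : Matrix m n ℝ) :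
    ‖A.map f - B.map f‖ ≤ L * ‖A - B‖ := by
  have hL := nonneg_of_abs_sub_le_mul hf
  rw [← sq_le_sq₀ (norm_nonneg _) (by positivity), mul_pow, frobenius_norm_sq,
    frobenius_norm_sq]
  simp_rw [Finset.mul_sum]
  gcongr with i _ j _
  simpa [mul_pow] using pow_le_pow_left₀ (abs_nonneg _) (hf (A i j) (B i j)) 2

theorem frobenius_norm_map_le {f : ℝ → ℝ} {L : ℝ}
    (hf0 : f 0 = 0) (hf : ∀ x y, |f x - f y| ≤ L * |x - y|) (A : Matrix m n ℝ) :
    ‖A.map f‖ ≤ L * ‖A‖ := by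
  simpa [Matrix.map_zero f hf0] using frobenius_norm_map_sub_map_le hf A 0

end FrobeniusLemmas

section Layer

variable {ι h₀ h h' : Type*} [Fintype ι] [Fintype h₀] [Fintype h] [Fintype h']
  [DecidableEq ι] [DecidableEq h₀] [DecidableEq h] [DecidableEq h']

def mpgnnLayer (φ ρ ψ : ℝ → ℝ) (U : Matrix h₀ h ℝ) (W : Matrix h' h ℝ) (P : Matrix ι ι ℝ)
    (X : Matrix ι h₀ ℝ) (H : Matrix ι h' ℝ) : Matrix ι h ℝ :=
  (X * U + (P * H.map ψ * W).map ρ).map φ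

theorem norm_mpgnnLayer_le {φ ρ ψ : ℝ → ℝ} {L : ℝ} (hφ0 : φ 0 = 0) (hρ0 : ρ 0 = 0)
    (hψ0 : ψ 0 = 0) (hφ : ∀ x y, |φ x - φ y| ≤ L * |x - y|)
    (hρ : ∀ x y, |ρ x - ρ y| ≤ L * |x - y|) (hψ : ∀ x y, |ψ x - ψ y| ≤ L * |x - y|)
    (U : Matrix h₀ h ℝ) (W : Matrix h' h ℝ) (P : Matrix ι ι ℝ) (X : Matrix ι h₀ ℝ)
    (H : Matrix ι h' ℝ) :
    ‖mpgnnLayer φ ρ ψ U W P X H‖ ≤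
      L * ‖X‖ * specNorm U + L ^ 3 * specNorm P * specNorm W * ‖H‖ := by
  have hL := nonneg_of_abs_sub_le_mul hφ
  have hmsg : ‖P * H.map ψ * W‖ ≤ specNorm P * (L * ‖H‖) * specNorm W :=
    (frobenius_norm_mul_mul_le _ _ _).trans <| mul_le_mul_of_nonneg_right
      (mul_le_mul_of_nonneg_left (frobenius_norm_map_le hψ0 hψ H) (specNorm_nonneg P))
      (specNorm_nonneg W)
  calc ‖mpgnnLayer φ ρ ψ U W P X H‖
      ≤ L * (‖X * U‖ + ‖(P * H.map ψ * W).map ρ‖) :=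
        (frobenius_norm_map_le hφ0 hφ _).trans (by gcongr; exact norm_add_le _ _)
    _ ≤ L * (‖X‖ * specNorm U + L * (specNorm P * (L * ‖H‖) * specNorm W)) := by
        gcongr
        · exact frobenius_norm_mul_le_mul_specNorm X U
        · exact (frobenius_norm_map_le hρ0 hρ _).trans (by gcongr)
    _ = L * ‖X‖ * specNorm U + L ^ 3 * specNorm P * specNorm W * ‖H‖ := by ring

theorem norm_mpgnnLayer_sub_le {φ ρ ψ : ℝ → ℝ} {L : ℝ} (hψ0 : ψ 0 = 0)
    (hφ : ∀ x y, |φ x - φ y| ≤ L * |x - y|) (hρ : ∀ x y, |ρ x - ρ y| ≤ L * |x - y|)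
    (hψ : ∀ x y, |ψ x - ψ y| ≤ L * |x - y|) (U ΔU : Matrix h₀ h ℝ) (W ΔW : Matrix h' h ℝ)
    (P : Matrix ι ι ℝ) (X : Matrix ι h₀ ℝ) (H H' : Matrix ι h' ℝ) :
    ‖mpgnnLayer φ ρ ψ (U + ΔU) (W + ΔW) P X H' - mpgnnLayer φ ρ ψ U W P X H‖ ≤
      L * ‖X‖ * specNorm ΔU +
        L ^ 3 * specNorm P * (specNorm ΔW * ‖H'‖ + specNorm W * ‖H' - H‖) := by
  have hL := nonneg_of_abs_sub_le_mul hφ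
  have hsplit : P * H'.map ψ * (W + ΔW) - P * H.map ψ * W =
      P * H'.map ψ * ΔW + P * (H'.map ψ - H.map ψ) * W := by
    simp only [Matrix.mul_add, Matrix.mul_sub, Matrix.sub_mul]; abel
  have hmsg : ‖P * H'.map ψ * (W + ΔW) - P * H.map ψ * W‖ ≤
      specNorm P * (L * ‖H'‖) * specNorm ΔW + specNorm P * (L * ‖H' - H‖) * specNorm W := by
    rw [hsplit]
    refine (norm_add_le _ _).trans (add_le_add ?_ ?_)
    · exact (frobenius_norm_mul_mul_le _ _ _).trans <| mul_le_mul_of_nonneg_right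
        (mul_le_mul_of_nonneg_left (frobenius_norm_map_le hψ0 hψ H') (specNorm_nonneg P))
        (specNorm_nonneg _)
    · exact (frobenius_norm_mul_mul_le _ _ _).trans <| mul_le_mul_of_nonneg_right
        (mul_le_mul_of_nonneg_left (frobenius_norm_map_sub_map_le hψ H' H) (specNorm_nonneg P))
        (specNorm_nonneg _)
  have hpre : X * (U + ΔU) + (P * H'.map ψ * (W + ΔW)).map ρ -
      (X * U + (P * H.map ψ * W).map ρ) =
        X * ΔU + ((P * H'.map ψ * (W + ΔW)).map ρ - (P * H.map ψ * W).map ρ) := by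
    rw [Matrix.mul_add]; abel
  calc ‖mpgnnLayer φ ρ ψ (U + ΔU) (W + ΔW) P X H' - mpgnnLayer φ ρ ψ U W P X H‖
      ≤ L * (‖X * ΔU‖ + ‖(P * H'.map ψ * (W + ΔW)).map ρ - (P * H.map ψ * W).map ρ‖) := by
        refine (frobenius_norm_map_sub_map_le hφ _ _).trans ?_
        rw [hpre]
        gcongr
        exact norm_add_le _ _
    _ ≤ L * (‖X‖ * specNorm ΔU + L * (specNorm P * (L * ‖H'‖) * specNorm ΔW +
          specNorm P * (L * ‖H' - H‖) * specNorm W)) := by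
        gcongr
        · exact frobenius_norm_mul_le_mul_specNorm X ΔU
        · exact (frobenius_norm_map_sub_map_le hρ _ _).trans (by gcongr)
    _ = _ := by ring

end Layer

section Representations

variable {n : ℕ} {d : ℕ → ℕ} {φ ρ ψ : ℕ → ℝ → ℝ} {P : Matrix (Fin n) (Fin n) ℝ}
  {X : Matrix (Fin n) (Fin (d 0)) ℝ}

theorem mpgnnRep_succ (W : ∀ k : ℕ, Matrix (Fin (d k)) (Fin (d (k + 1))) ℝ)
    (U : ∀ k : ℕ, Matrix (Fin (d 0)) (Fin (d (k + 1))) ℝ) (k : ℕ) :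
    mpgnnRep d φ ρ ψ W U P X (k + 1) =
      mpgnnLayer (φ k) (ρ k) (ψ k) (U k) (W k) P X (mpgnnRep d φ ρ ψ W U P X k) :=
  rfl

theorem norm_mpgnnRep_le {W : ∀ k : ℕ, Matrix (Fin (d k)) (Fin (d (k + 1))) ℝ}
    {U : ∀ k : ℕ, Matrix (Fin (d 0)) (Fin (d (k + 1))) ℝ} {L M₁ M₂ Pbar ξ μ : ℝ} {k : ℕ}
    (hLipφ : ∀ j < k, ∀ x y : ℝ, |φ j x - φ j y| ≤ L * |x - y|)
    (hLipρ : ∀ j < k, ∀ x y : ℝ, |ρ j x - ρ j y| ≤ L * |x - y|)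
    (hLipψ : ∀ j < k, ∀ x y : ℝ, |ψ j x - ψ j y| ≤ L * |x - y|)
    (hφ0 : ∀ j < k, φ j 0 = 0) (hρ0 : ∀ j < k, ρ j 0 = 0) (hψ0 : ∀ j < k, ψ j 0 = 0)
    (hL : 0 ≤ L) (hM₁ : 0 ≤ M₁) (hM₂ : 0 ≤ M₂) (hμ : 1 ≤ μ)
    (hU : ∀ j < k, specNorm (U j) ≤ μ * M₁) (hW : ∀ j < k, specNorm (W j) ≤ μ * M₂)
    (hP : specNorm P ≤ Pbar) (hX : ‖X‖ ≤ ξ) :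
    ‖mpgnnRep d φ ρ ψ W U P X k‖ ≤
      μ ^ k * (L * ξ * M₁ * ∑ i ∈ range k, (L ^ 3 * M₂ * Pbar) ^ i) := by
  have hPbar : 0 ≤ Pbar := (specNorm_nonneg P).trans hP
  have hξ : 0 ≤ ξ := (norm_nonneg X).trans hX
  set H := mpgnnRep d φ ρ ψ W U P X
  set a := L * ξ * M₁
  set τ := L ^ 3 * M₂ * Pbar
  have ha : 0 ≤ a := by positivity
  have hτ : 0 ≤ τ := by positivity
  refine le_of_linear_recurrence (x := fun j => ‖H j‖)
    (b := fun j => μ ^ j * (a * ∑ i ∈ range j, τ ^ i)) (α := fun _ => μ * a) (τ := μ * τ)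
    (by positivity) (by simp [H, mpgnnRep]) (fun j hj => ?_) (fun j _ => ?_) k le_rfl
  · dsimp only [H]
    rw [mpgnnRep_succ]
    refine (norm_mpgnnLayer_le (hφ0 j hj) (hρ0 j hj) (hψ0 j hj) (hLipφ j hj) (hLipρ j hj)
      (hLipψ j hj) _ _ _ _ _).trans ?_
    calc L * ‖X‖ * specNorm (U j) + L ^ 3 * specNorm P * specNorm (W j) * ‖H j‖
        ≤ L * ξ * (μ * M₁) + L ^ 3 * Pbar * (μ * M₂) * ‖H j‖ := by
          gcongr
          exacts [specNorm_nonneg _, hU j hj, specNorm_nonneg _, hW j hj]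
      _ = μ * a + μ * τ * ‖H j‖ := by ring
  · exact add_mul_pow_mul_geom_sum_le ha hμ j

theorem norm_mpgnnRep_sub_le {W ΔW : ∀ k : ℕ, Matrix (Fin (d k)) (Fin (d (k + 1))) ℝ}
    {U ΔU : ∀ k : ℕ, Matrix (Fin (d 0)) (Fin (d (k + 1))) ℝ} {L M₁ M₂ Pbar ξ η : ℝ} {k : ℕ}
    (hLipφ : ∀ j < k, ∀ x y : ℝ, |φ j x - φ j y| ≤ L * |x - y|)
    (hLipρ : ∀ j < k, ∀ x y : ℝ, |ρ j x - ρ j y| ≤ L * |x - y|)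
    (hLipψ : ∀ j < k, ∀ x y : ℝ, |ψ j x - ψ j y| ≤ L * |x - y|)
    (hφ0 : ∀ j < k, φ j 0 = 0) (hρ0 : ∀ j < k, ρ j 0 = 0) (hψ0 : ∀ j < k, ψ j 0 = 0)
    (hL : 0 ≤ L) (hM₁ : 0 ≤ M₁) (hM₂ : 0 ≤ M₂) (hη : 0 ≤ η)
    (hU : ∀ j < k, specNorm (U j) ≤ M₁) (hW : ∀ j < k, specNorm (W j) ≤ M₂)
    (hΔU : ∀ j < k, specNorm (ΔU j) ≤ η * M₁) (hΔW : ∀ j < k, specNorm (ΔW j) ≤ η * M₂)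
    (hP : specNorm P ≤ Pbar) (hX : ‖X‖ ≤ ξ) :
    ‖mpgnnRep d φ ρ ψ (fun j => W j + ΔW j) (fun j => U j + ΔU j) P X k -
        mpgnnRep d φ ρ ψ W U P X k‖ ≤
      η * k * ((1 + η) ^ k * (L * ξ * M₁ * ∑ i ∈ range k, (L ^ 3 * M₂ * Pbar) ^ i)) := by
  have hPbar : 0 ≤ Pbar := (specNorm_nonneg P).trans hP
  have hξ : 0 ≤ ξ := (norm_nonneg X).trans hX
  set H' := mpgnnRep d φ ρ ψ (fun j => W j + ΔW j) (fun j => U j + ΔU j) P X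
  set H := mpgnnRep d φ ρ ψ W U P X
  set a := L * ξ * M₁
  set τ := L ^ 3 * M₂ * Pbar
  set b : ℕ → ℝ := fun j => (1 + η) ^ j * (a * ∑ i ∈ range j, τ ^ i)
  have ha : 0 ≤ a := by positivity
  have hτ : 0 ≤ τ := by positivity
  have hb : ∀ j, 0 ≤ b j := fun j => by positivity
  -- `b` is a supersolution of the unperturbed recursion, so `η j b j` absorbs the source term.
  have hb_succ : ∀ j, a + τ * b j ≤ b (j + 1) := fun j =>
    calc a + τ * b j ≤ (1 + η) * (a + τ * b j) :=
          le_mul_of_one_le_left (add_nonneg ha (mul_nonneg hτ (hb j))) (by linarith)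
      _ = (1 + η) * a + (1 + η) * τ * b j := by ring
      _ ≤ b (j + 1) := add_mul_pow_mul_geom_sum_le ha (by linarith) j
  have hH' : ∀ j < k, ‖H' j‖ ≤ b j := fun j hj =>
    norm_mpgnnRep_le (fun i hi => hLipφ i (hi.trans hj)) (fun i hi => hLipρ i (hi.trans hj))
      (fun i hi => hLipψ i (hi.trans hj)) (fun i hi => hφ0 i (hi.trans hj))
      (fun i hi => hρ0 i (hi.trans hj)) (fun i hi => hψ0 i (hi.trans hj)) hL hM₁ hM₂
      (by linarith)
      (fun i hi => (specNorm_add_le _ _).trans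
        (by linarith [hU i (hi.trans hj), hΔU i (hi.trans hj)]))
      (fun i hi => (specNorm_add_le _ _).trans
        (by linarith [hW i (hi.trans hj), hΔW i (hi.trans hj)]))
      hP hX
  refine le_of_linear_recurrence (x := fun j => ‖H' j - H j‖) (b := fun j => η * j * b j)
    (α := fun j => η * (a + τ * b j)) hτ (by simp [H', H, mpgnnRep]) (fun j hj => ?_)
    (fun j _ => ?_) k le_rfl
  · dsimp only [H', H]
    rw [mpgnnRep_succ, mpgnnRep_succ]
    refine (norm_mpgnnLayer_sub_le (hψ0 j hj) (hLipφ j hj) (hLipρ j hj) (hLipψ j hj)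
      _ _ _ _ _ _ _ _).trans ?_
    calc L * ‖X‖ * specNorm (ΔU j) +
          L ^ 3 * specNorm P * (specNorm (ΔW j) * ‖H' j‖ + specNorm (W j) * ‖H' j - H j‖)
        ≤ L * ξ * (η * M₁) + L ^ 3 * Pbar * (η * M₂ * b j + M₂ * ‖H' j - H j‖) := by
          gcongr
          exacts [specNorm_nonneg _, hΔU j hj,
            add_nonneg (mul_nonneg (specNorm_nonneg _) (norm_nonneg _))
              (mul_nonneg (specNorm_nonneg _) (norm_nonneg _)),
            hΔW j hj, hH' j hj, hW j hj]
      _ = η * (a + τ * b j) + τ * ‖H' j - H j‖ := by ring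
  · push_cast
    calc η * (a + τ * b j) + τ * (η * j * b j)
        ≤ η * (a + τ * b j) + η * j * (a + τ * b j) := by
          have : 0 ≤ η * j * a := by positivity
          linarith
      _ = η * (j + 1) * (a + τ * b j) := by ring
      _ ≤ η * (j + 1) * b (j + 1) := by gcongr; exact hb_succ j

end Representations

section Readout

theorem abs_inv_mul_sum_col_le {n : ℕ} {m : Type*} [Fintype m] (A : Matrix (Fin n) m ℝ)
    (c : m) : |(n : ℝ)⁻¹ * ∑ r, A r c| ≤ ‖A‖ / √n := by
  have h := abs_sum_col_le_sqrt_card_mul_frobenius_norm A c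
  rw [Fintype.card_fin] at h
  calc |(n : ℝ)⁻¹ * ∑ r, A r c| ≤ (n : ℝ)⁻¹ * (√n * ‖A‖) := by
        rw [abs_mul, abs_inv, Nat.abs_cast]; gcongr
    _ = ‖A‖ / √n := by
        rw [← mul_assoc, inv_mul_eq_div, Real.sqrt_div_self', one_div, inv_mul_eq_div]

theorem abs_mpgnnOut_sub_le {n : ℕ} {d : ℕ → ℕ} {φ ρ ψ : ℕ → ℝ → ℝ}
    {W ΔW : ∀ k : ℕ, Matrix (Fin (d k)) (Fin (d (k + 1))) ℝ}
    {U ΔU : ∀ k : ℕ, Matrix (Fin (d 0)) (Fin (d (k + 1))) ℝ} {P : Matrix (Fin n) (Fin n) ℝ}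
    {X : Matrix (Fin n) (Fin (d 0)) ℝ} {L M₁ M₂ Pbar β η : ℝ} {k : ℕ}
    (hLipφ : ∀ j < k, ∀ x y : ℝ, |φ j x - φ j y| ≤ L * |x - y|)
    (hLipρ : ∀ j < k, ∀ x y : ℝ, |ρ j x - ρ j y| ≤ L * |x - y|)
    (hLipψ : ∀ j < k, ∀ x y : ℝ, |ψ j x - ψ j y| ≤ L * |x - y|)
    (hφ0 : ∀ j < k, φ j 0 = 0) (hρ0 : ∀ j < k, ρ j 0 = 0) (hψ0 : ∀ j < k, ψ j 0 = 0)
    (hL : 0 ≤ L) (hM₁ : 0 ≤ M₁) (hM₂ : 0 ≤ M₂) (hη : 0 ≤ η)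
    (hU : ∀ j < k, specNorm (U j) ≤ M₁) (hW : ∀ j < k + 1, specNorm (W j) ≤ M₂)
    (hΔU : ∀ j < k, specNorm (ΔU j) ≤ η * M₁) (hΔW : ∀ j < k + 1, specNorm (ΔW j) ≤ η * M₂)
    (hP : specNorm P ≤ Pbar) (hX : specNorm X ≤ β) (c : Fin (d (k + 1))) :
    |mpgnnOut d φ ρ ψ (fun j => W j + ΔW j) (fun j => U j + ΔU j) P X (k + 1) c -
        mpgnnOut d φ ρ ψ W U P X (k + 1) c| ≤
      η * (k + 1) *
        ((1 + η) ^ k * (L * β * M₁ * M₂ * ∑ i ∈ range k, (L ^ 3 * M₂ * Pbar) ^ i)) := by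
  have hXF : ‖X‖ ≤ √n * β := by
    simpa using (frobenius_norm_le_sqrt_card_mul_specNorm X).trans
      (mul_le_mul_of_nonneg_left hX (Real.sqrt_nonneg _))
  set H' := mpgnnRep d φ ρ ψ (fun j => W j + ΔW j) (fun j => U j + ΔU j) P X k
  set H := mpgnnRep d φ ρ ψ W U P X k
  set b := (1 + η) ^ k * (L * (√n * β) * M₁ * ∑ i ∈ range k, (L ^ 3 * M₂ * Pbar) ^ i)
    with hb_def
  have hH' : ‖H'‖ ≤ b :=
    norm_mpgnnRep_le hLipφ hLipρ hLipψ hφ0 hρ0 hψ0 hL hM₁ hM₂ (by linarith)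
      (fun j hj => (specNorm_add_le _ _).trans (by linarith [hU j hj, hΔU j hj]))
      (fun j hj => (specNorm_add_le _ _).trans
        (by linarith [hW j (by omega), hΔW j (by omega)]))
      hP hXF
  have hb : 0 ≤ b := (norm_nonneg _).trans hH'
  have hD : ‖H' - H‖ ≤ η * k * b :=
    norm_mpgnnRep_sub_le hLipφ hLipρ hLipψ hφ0 hρ0 hψ0 hL hM₁ hM₂ hη hU
      (fun j hj => hW j (by omega)) hΔU (fun j hj => hΔW j (by omega)) hP hXF
  have hsplit : H' * (W k + ΔW k) - H * W k = H' * ΔW k + (H' - H) * W k := by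
    rw [Matrix.mul_add, Matrix.sub_mul]; abel
  have hnorm : ‖H' * (W k + ΔW k) - H * W k‖ ≤ η * (k + 1) * M₂ * b := by
    rw [hsplit]
    calc ‖H' * ΔW k + (H' - H) * W k‖ ≤ ‖H'‖ * specNorm (ΔW k) + ‖H' - H‖ * specNorm (W k) :=
          (norm_add_le _ _).trans (add_le_add (frobenius_norm_mul_le_mul_specNorm _ _)
            (frobenius_norm_mul_le_mul_specNorm _ _))
      _ ≤ b * (η * M₂) + η * k * b * M₂ :=
          add_le_add (mul_le_mul hH' (hΔW k (by omega)) (specNorm_nonneg _) hb)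
            (mul_le_mul hD (hW k (by omega)) (specNorm_nonneg _) (by positivity))
      _ = η * (k + 1) * M₂ * b := by ring
  have hreadout : mpgnnOut d φ ρ ψ (fun j => W j + ΔW j) (fun j => U j + ΔU j) P X (k + 1) c -
      mpgnnOut d φ ρ ψ W U P X (k + 1) c =
        (n : ℝ)⁻¹ * ∑ r, (H' * (W k + ΔW k) - H * W k) r c := by
    simp only [mpgnnOut, Matrix.sub_apply, Finset.sum_sub_distrib, mul_sub]; rfl
  rw [hreadout]
  refine (abs_inv_mul_sum_col_le _ c).trans (div_le_of_le_mul₀ (Real.sqrt_nonneg _) ?_ ?_)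
  · have hβ : 0 ≤ β := (specNorm_nonneg X).trans hX
    have hPbar : 0 ≤ Pbar := (specNorm_nonneg P).trans hP
    positivity
  · exact hnorm.trans_eq (by rw [hb_def]; ring)

end Readout

end Frobenius

theorem sInf_image_le_sInf_image_add {α : Type*} {s : Set α} {f g : α → ℝ} {C : ℝ}
    (hs : s.Nonempty) (hfg : ∀ a ∈ s, |f a - g a| ≤ C) (hf : BddBelow (f '' s)) :
    BddBelow (g '' s) ∧ sInf (g '' s) ≤ sInf (f '' s) + C := by
  obtain ⟨m, hm⟩ := hf
  have hg : BddBelow (g '' s) := ⟨m - C, Set.forall_mem_image.2 fun a ha => by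
    linarith [hm (Set.mem_image_of_mem f ha), (abs_le.1 (hfg a ha)).2]⟩
  refine ⟨hg, sub_le_iff_le_add.1 <| le_csInf (hs.image f) <|
    Set.forall_mem_image.2 fun a ha => ?_⟩
  linarith [csInf_le hg (Set.mem_image_of_mem g ha), (abs_le.1 (hfg a ha)).1]

theorem abs_sInf_image_sub_sInf_image_le {α : Type*} {s : Set α} {f g : α → ℝ} {C : ℝ}
    (hC : 0 ≤ C) (hfg : ∀ a ∈ s, |f a - g a| ≤ C) :
    |sInf (f '' s) - sInf (g '' s)| ≤ C := by
  rcases s.eq_empty_or_nonempty with rfl | hs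
  · simpa using hC
  have hgf : ∀ a ∈ s, |g a - f a| ≤ C := fun a ha => abs_sub_comm (f a) (g a) ▸ hfg a ha
  by_cases hf : BddBelow (f '' s)
  · obtain ⟨hg, hgf_le⟩ := sInf_image_le_sInf_image_add hs hfg hf
    exact abs_sub_le_iff.2 ⟨by linarith [(sInf_image_le_sInf_image_add hs hgf hg).2], by linarith⟩
  -- both infima are then the junk value `sInf = 0` of an unbounded set
  · have hg : ¬BddBelow (g '' s) := fun hg => hf (sInf_image_le_sInf_image_add hs hgf hg).1
    simpa [Real.sInf_of_not_bddBelow hf, Real.sInf_of_not_bddBelow hg] using hC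

theorem specNorm_le_of_mem_attack {n h₀ : ℕ} {ε B : ℝ}
    {G G' : Matrix (Fin n) (Fin h₀) ℝ × Matrix (Fin n) (Fin n) ℝ} (hG' : G' ∈ attack ε G)
    (hG : specNorm G.1 ≤ B) : specNorm G'.1 ≤ B + ε := by
  calc specNorm G'.1 = specNorm (G'.1 - G.1 + G.1) := by rw [sub_add_cancel]
    _ ≤ specNorm (G'.1 - G.1) + specNorm G.1 := specNorm_add_le _ _
    _ ≤ B + ε := by linarith [hG'.1]

theorem bddAbove_setOf_exists_lt (f : ℕ → ℝ) (N : ℕ) : BddAbove {x | ∃ k, k < N ∧ f k = x} :=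
  ((Set.finite_Iio N).image f).bddAbove

section RelativePerturbation

variable {l : ℕ} {d : ℕ → ℕ} {W ΔW : ∀ k : ℕ, Matrix (Fin (d k)) (Fin (d (k + 1))) ℝ}
  {U ΔU : ∀ k : ℕ, Matrix (Fin (d 0)) (Fin (d (k + 1))) ℝ}

theorem etaRatio_nonneg (hl : 0 < l) : 0 ≤ etaRatio l d W ΔW U ΔU :=
  (div_nonneg (specNorm_nonneg _) (specNorm_nonneg _)).trans <|
    le_csSup ((bddAbove_setOf_exists_lt _ _).union (bddAbove_setOf_exists_lt _ _))
      (Or.inl ⟨0, hl, rfl⟩)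

theorem specNorm_ΔW_le_etaRatio_mul {M₂ : ℝ} (hWne : ∀ k < l, W k ≠ 0)
    (hW : ∀ k < l, specNorm (W k) ≤ M₂) :
    ∀ k < l, specNorm (ΔW k) ≤ etaRatio l d W ΔW U ΔU * M₂ := fun k hk => by
  refine le_trans ?_ (mul_le_mul_of_nonneg_left (hW k hk) (etaRatio_nonneg (by omega)))
  rw [← div_le_iff₀ (specNorm_pos (hWne k hk))]
  exact le_csSup ((bddAbove_setOf_exists_lt _ _).union (bddAbove_setOf_exists_lt _ _))
    (Or.inl ⟨k, hk, rfl⟩)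

theorem specNorm_ΔU_le_etaRatio_mul {M₁ : ℝ} (hUne : ∀ k < l - 1, U k ≠ 0)
    (hU : ∀ k < l - 1, specNorm (U k) ≤ M₁) :
    ∀ k < l - 1, specNorm (ΔU k) ≤ etaRatio l d W ΔW U ΔU * M₁ := fun k hk => by
  refine le_trans ?_ (mul_le_mul_of_nonneg_left (hU k hk) (etaRatio_nonneg (by omega)))
  rw [← div_le_iff₀ (specNorm_pos (hUne k hk))]
  exact le_csSup ((bddAbove_setOf_exists_lt _ _).union (bddAbove_setOf_exists_lt _ _))
    (Or.inr ⟨k, hk, rfl⟩)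

end RelativePerturbation

theorem abs_mpgnnRobustMarginPair_sub_le {n l : ℕ} {d : ℕ → ℕ} {φ ρ ψ : ℕ → ℝ → ℝ}
    {W W' : ∀ k : ℕ, Matrix (Fin (d k)) (Fin (d (k + 1))) ℝ}
    {U U' : ∀ k : ℕ, Matrix (Fin (d 0)) (Fin (d (k + 1))) ℝ}
    {Pfun : Matrix (Fin n) (Fin n) ℝ → Matrix (Fin n) (Fin n) ℝ} {ε K : ℝ}
    {G : Matrix (Fin n) (Fin (d 0)) ℝ × Matrix (Fin n) (Fin n) ℝ} (hK : 0 ≤ K)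
    (hout : ∀ G' ∈ attack ε G, ∀ c, |mpgnnOut d φ ρ ψ W' U' (Pfun G'.2) G'.1 l c -
      mpgnnOut d φ ρ ψ W U (Pfun G'.2) G'.1 l c| ≤ K) (i j : Fin (d l)) :
    |mpgnnRobustMarginPair l d φ ρ ψ W' U' Pfun ε G i j -
      mpgnnRobustMarginPair l d φ ρ ψ W U Pfun ε G i j| ≤ 2 * K :=
  abs_sInf_image_sub_sInf_image_le (by linarith) fun G' hG' => by
    rw [sub_sub_sub_comm]
    exact (abs_sub _ _).trans (by linarith [hout G' hG' i, hout G' hG' j])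

/-- Perturbation bound for the robust margin operator of an `l`-layer MPGNN under
`ε`-attacks: with `η ≤ 1/l` the maximal relative perturbation size, `‖X‖₂ ≤ B`,
`‖P_{G'}‖₂ ≤ P̄` on the attack set, and `τ = L³ M₂ P̄`, the change of the robust margin
operator is at most `2 e η L (B+ε) M₁ M₂ (l+1)²` if `τ = 1`, and at most
`2 e η l L (B+ε) M₁ M₂ (τ^{l-1} − 1)/(τ − 1)` if `τ ≠ 1`. -/
theorem mpgnn_robust_margin_pert_le (n l : ℕ) (hl : 2 ≤ l) (d : ℕ → ℕ)
    (φ ρ ψ : ℕ → ℝ → ℝ)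
    (W ΔW : ∀ k : ℕ, Matrix (Fin (d k)) (Fin (d (k + 1))) ℝ)
    (U ΔU : ∀ k : ℕ, Matrix (Fin (d 0)) (Fin (d (k + 1))) ℝ)
    (L M₁ M₂ : ℝ)
    (hLipφ : ∀ k, k < l - 1 → ∀ x y : ℝ, |φ k x - φ k y| ≤ L * |x - y|)
    (hLipρ : ∀ k, k < l - 1 → ∀ x y : ℝ, |ρ k x - ρ k y| ≤ L * |x - y|)
    (hLipψ : ∀ k, k < l - 1 → ∀ x y : ℝ, |ψ k x - ψ k y| ≤ L * |x - y|)
    (hφ0 : ∀ k, k < l - 1 → φ k 0 = 0) (hρ0 : ∀ k, k < l - 1 → ρ k 0 = 0)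
    (hψ0 : ∀ k, k < l - 1 → ψ k 0 = 0)
    (hWne : ∀ k, k < l → W k ≠ 0) (hUne : ∀ k, k < l - 1 → U k ≠ 0)
    (hU : ∀ k, k < l - 1 → specNorm (U k) ≤ M₁)
    (hW : ∀ k, k < l → specNorm (W k) ≤ M₂)
    (hη : etaRatio l d W ΔW U ΔU ≤ 1 / (l : ℝ))
    (ε : ℝ) (hε : 0 < ε)
    (X : Matrix (Fin n) (Fin (d 0)) ℝ) (A : Matrix (Fin n) (Fin n) ℝ)
    (B : ℝ) (hX : specNorm X ≤ B)
    (Pfun : Matrix (Fin n) (Fin n) ℝ → Matrix (Fin n) (Fin n) ℝ) (Pbar : ℝ)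
    (hPbar : ∀ G' ∈ attack ε (X, A), specNorm (Pfun G'.2) ≤ Pbar)
    (i j : Fin (d l)) :
    (L ^ 3 * M₂ * Pbar = 1 →
      |mpgnnRobustMarginPair l d φ ρ ψ (fun k => W k + ΔW k) (fun k => U k + ΔU k)
          Pfun ε (X, A) i j -
        mpgnnRobustMarginPair l d φ ρ ψ W U Pfun ε (X, A) i j| ≤
        2 * Real.exp 1 * etaRatio l d W ΔW U ΔU * L * (B + ε) * M₁ * M₂ * (l + 1) ^ 2) ∧
    (L ^ 3 * M₂ * Pbar ≠ 1 →
      |mpgnnRobustMarginPair l d φ ρ ψ (fun k => W k + ΔW k) (fun k => U k + ΔU k)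
          Pfun ε (X, A) i j -
        mpgnnRobustMarginPair l d φ ρ ψ W U Pfun ε (X, A) i j| ≤
        2 * Real.exp 1 * etaRatio l d W ΔW U ΔU * l * L * (B + ε) * M₁ * M₂ *
          (((L ^ 3 * M₂ * Pbar) ^ (l - 1) - 1) / (L ^ 3 * M₂ * Pbar - 1))) := by
  have hΔW := specNorm_ΔW_le_etaRatio_mul (ΔW := ΔW) (U := U) (ΔU := ΔU) hWne hW
  have hΔU := specNorm_ΔU_le_etaRatio_mul (W := W) (ΔW := ΔW) (ΔU := ΔU) hUne hU
  obtain ⟨k, rfl⟩ : ∃ k, l = k + 1 := ⟨l - 1, by omega⟩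
  simp only [Nat.add_sub_cancel] at hLipφ hLipρ hLipψ hφ0 hρ0 hψ0 hU hΔU ⊢
  have hL : 0 ≤ L := nonneg_of_abs_sub_le_mul (hLipφ 0 (by omega))
  have hM₁ : 0 ≤ M₁ := (specNorm_nonneg _).trans (hU 0 (by omega))
  have hM₂ : 0 ≤ M₂ := (specNorm_nonneg _).trans (hW 0 (by omega))
  have hXA : (X, 0) ∈ attack ε (X, A) :=
    ⟨by simpa [specNorm_zero] using hε.le, by simp [Matrix.IsSymm], fun _ _ => Or.inl rfl⟩
  have hβ : 0 ≤ B + ε := by linarith [(specNorm_nonneg X).trans hX]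
  have hPbar0 : 0 ≤ Pbar := (specNorm_nonneg _).trans (hPbar _ hXA)
  set η := etaRatio (k + 1) d W ΔW U ΔU
  have hη0 : 0 ≤ η := etaRatio_nonneg (by omega)
  have hexp : (1 + η) ^ k ≤ Real.exp 1 :=
    (pow_le_pow_right₀ (by linarith) k.le_succ).trans (one_add_pow_le_exp_one hη0 hη)
  set S := ∑ i ∈ range k, (L ^ 3 * M₂ * Pbar) ^ i with hS
  set K := Real.exp 1 * η * (k + 1) * L * (B + ε) * M₁ * M₂ * S with hK
  have hout : ∀ G' ∈ attack ε (X, A), ∀ c,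
      |mpgnnOut d φ ρ ψ (fun k => W k + ΔW k) (fun k => U k + ΔU k) (Pfun G'.2) G'.1 (k + 1) c -
        mpgnnOut d φ ρ ψ W U (Pfun G'.2) G'.1 (k + 1) c| ≤ K := fun G' hG' c =>
    (abs_mpgnnOut_sub_le hLipφ hLipρ hLipψ hφ0 hρ0 hψ0 hL hM₁ hM₂ hη0 hU hW hΔU hΔW
      (hPbar G' hG') (specNorm_le_of_mem_attack hG' hX) c).trans <|
        (mul_le_mul_of_nonneg_left (mul_le_mul_of_nonneg_right hexp (by positivity))
          (by positivity)).trans_eq (by ring)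
  have hmargin := abs_mpgnnRobustMarginPair_sub_le (by positivity) hout i j
  refine ⟨fun hτ => hmargin.trans ?_, fun hτ => hmargin.trans_eq ?_⟩
  · have hSk : S = k := by simp [hS, hτ]
    rw [hK, hSk]
    push_cast
    calc 2 * (Real.exp 1 * η * (k + 1) * L * (B + ε) * M₁ * M₂ * k)
        = 2 * Real.exp 1 * η * L * (B + ε) * M₁ * M₂ * ((k + 1) * k) := by ring
      _ ≤ 2 * Real.exp 1 * η * L * (B + ε) * M₁ * M₂ * (k + 1 + 1) ^ 2 := by gcongr; nlinarith
  · rw [hK, hS, geom_sum_eq hτ]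
    push_cast
    ring

end
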